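/- arXiv:1308.0732 — 4 statements merged into one kernel-verified Lean document; each statement's English description precedes it below -/
import Mathlib

section
/- Let α > 0 and suppose v ∈ C²([0,1]) satisfies (v - α|v|v)'' + λ v = 0 on (0,1) with v(0) = v(1) = 0, v not identically zero, and suppose there exists c ∈ (0,1) with |v(c)| = 1/(2α) and v smooth near 0 and c. Then λ > 0. -/
open Real Set

section Aux
open Filter Asymptotics

lemma hasDerivAt_absMulSelf (t : ℝ) : HasDerivAt (fun s : ℝ => |s| * s) (2 * |t|) t := by
  rcases lt_trichotomy t 0 with ht | ht | ht
  · have h : HasDerivAt (fun s : ℝ => -(s * s)) (-(1 * t + t * 1)) t :=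
      ((hasDerivAt_id t).mul (hasDerivAt_id t)).neg
    have h2 : (fun s : ℝ => |s| * s) =ᶠ[nhds t] fun s => -(s * s) := by
      filter_upwards [Iio_mem_nhds ht] with s hs
      rw [abs_of_neg hs]; ring
    have h3 := h.congr_of_eventuallyEq h2
    rw [show 2 * |t| = -(1 * t + t * 1) by rw [abs_of_neg ht]; ring]
    exact h3
  · subst ht
    rw [hasDerivAt_iff_tendsto_slope]
    have h2 : (fun s : ℝ => |s|) =ᶠ[nhdsWithin (0:ℝ) {(0:ℝ)}ᶜ] slope (fun s : ℝ => |s| * s) 0 := by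
      filter_upwards [self_mem_nhdsWithin] with s hs
      simp only [slope_def_field]
      rw [mem_compl_iff, mem_singleton_iff] at hs
      field_simp
      simp
    have h3 : Tendsto (fun s : ℝ => |s|) (nhdsWithin (0:ℝ) {(0:ℝ)}ᶜ) (nhds (2 * |(0:ℝ)|)) := by
      simp only [abs_zero, mul_zero]
      simpa using (continuous_abs.tendsto (0:ℝ)).mono_left (nhdsWithin_le_nhds)
    exact h3.congr' h2
  · have h : HasDerivAt (fun s : ℝ => s * s) (1 * t + t * 1) t :=
      (hasDerivAt_id t).mul (hasDerivAt_id t)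
    have h2 : (fun s : ℝ => |s| * s) =ᶠ[nhds t] fun s => s * s := by
      filter_upwards [Ioi_mem_nhds ht] with s hs
      rw [abs_of_pos hs]
    have h3 := h.congr_of_eventuallyEq h2
    rw [show 2 * |t| = 1 * t + t * 1 by rw [abs_of_pos ht]; ring]
    exact h3

lemma hasDerivAt_absMul {v : ℝ → ℝ} {x d : ℝ} (hv : HasDerivAt v d x) :
    HasDerivAt (fun y => |v y| * v y) (2 * |v x| * d) x :=
  (hasDerivAt_absMulSelf (v x)).comp x hv

lemma contDiffAt_two_elim {v : ℝ → ℝ} {x : ℝ} (h : ContDiffAt ℝ 2 v x) :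
    (∀ᶠ y in nhds x, HasDerivAt v (deriv v y) y) ∧
      HasDerivAt (deriv v) (deriv (deriv v) x) x := by
  obtain ⟨u, hu, hcd⟩ := h.contDiffOn le_rfl (by norm_num)
  have hxU : x ∈ interior u := mem_interior_iff_mem_nhds.2 hu
  have hU : IsOpen (interior u) := isOpen_interior
  have hcd2 : ContDiffOn ℝ 2 v (interior u) := hcd.mono interior_subset
  have h1 : ∀ y ∈ interior u, HasDerivAt v (deriv v y) y := fun y hy =>
    ((hcd2.contDiffAt (hU.mem_nhds hy)).differentiableAt (by norm_num)).hasDerivAt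
  have h2 : ContDiffOn ℝ 1 (deriv v) (interior u) :=
    hcd2.deriv_of_isOpen hU (by norm_num)
  refine ⟨eventually_of_mem (hU.mem_nhds hxU) h1, ?_⟩
  exact (((h2.contDiffAt (hU.mem_nhds hxU))).differentiableAt (by norm_num)).hasDerivAt

lemma keyA {α lam s : ℝ} {v : ℝ → ℝ} {x : ℝ} (hs : s = 1 ∨ s = -1)
    (hCD : ContDiffAt ℝ 2 v x)
    (hsgn : ∀ᶠ y in nhds x, |v y| = s * v y)
    (hode : deriv (deriv (fun y => v y - α * |v y| * v y)) x + lam * v x = 0) :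
    HasDerivAt (fun y => (deriv v y * (1 - 2*α*|v y|))^2/2
      + lam*((v y)^2/2 - (2*α/3)*|v y|^3)) 0 x := by
  obtain ⟨hev, hd2⟩ := contDiffAt_two_elim hCD
  have hv1 : HasDerivAt v (deriv v x) x := hev.self_of_nhds
  have hs2 : s^2 = 1 := by rcases hs with h | h <;> rw [h] <;> norm_num
  -- derivative of w near x
  have hw : ∀ᶠ y in nhds x, HasDerivAt (fun z => v z - α * |v z| * v z)
      (deriv v y - α * (2 * |v y| * deriv v y)) y := by
    filter_upwards [hev] with y hy
    have := hy.sub ((hasDerivAt_absMul hy).const_mul α)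
    exact this.congr_of_eventuallyEq (Filter.Eventually.of_forall fun z => by simp only [Pi.sub_apply]; ring)
  have hderivw : deriv (fun z => v z - α * |v z| * v z)
      =ᶠ[nhds x] fun y => deriv v y - α * (2 * (s * v y) * deriv v y) := by
    filter_upwards [hw, hsgn] with y hy hy2
    rw [hy.deriv, hy2]
  -- second derivative of w at x
  have hg : HasDerivAt (fun y => deriv v y - α * (2 * (s * v y) * deriv v y))
      (deriv (deriv v) x - α * ((2 * (s * deriv v x)) * deriv v x
        + (2 * (s * v x)) * deriv (deriv v) x)) x :=
    hd2.sub ((((hv1.const_mul s).const_mul 2).mul hd2).const_mul α)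
  have e1 : deriv (deriv (fun z => v z - α * |v z| * v z)) x
      = deriv (deriv v) x - α * ((2 * (s * deriv v x)) * deriv v x
        + (2 * (s * v x)) * deriv (deriv v) x) := by
    rw [Filter.EventuallyEq.deriv_eq hderivw]
    exact hg.deriv
  have E1 : deriv (deriv v) x - α * ((2 * (s * deriv v x)) * deriv v x
      + (2 * (s * v x)) * deriv (deriv v) x) = -(lam * v x) := by
    rw [← e1]; linarith
  -- the polynomial version of F
  have hA : HasDerivAt (fun y => deriv v y * (1 - 2*α*(s*v y)))
      (deriv (deriv v) x * (1 - 2*α*(s*v x)) + deriv v x * (0 - 2*α*(s*deriv v x))) x :=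
    hd2.mul ((hasDerivAt_const x (1:ℝ)).sub ((hv1.const_mul s).const_mul (2*α)))
  have hP : HasDerivAt (fun y => (deriv v y * (1 - 2*α*(s*v y)))^2/2
      + lam*((v y)^2/2 - (2*α/3)*(s*(v y)^3)))
      ((2 * (deriv v x * (1 - 2*α*(s*v x)))^1 *
        (deriv (deriv v) x * (1 - 2*α*(s*v x)) + deriv v x * (0 - 2*α*(s*deriv v x))))/2
       + lam * ((2 * (v x)^1 * deriv v x)/2
          - (2*α/3) * (s * (3 * (v x)^2 * deriv v x)))) x := by
    exact ((hA.pow 2).div_const 2).add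
      ((((hv1.pow 2).div_const 2).sub (((hv1.pow 3).const_mul s).const_mul (2*α/3))).const_mul lam)
  have hP0 : HasDerivAt (fun y => (deriv v y * (1 - 2*α*(s*v y)))^2/2
      + lam*((v y)^2/2 - (2*α/3)*(s*(v y)^3))) 0 x := by
    convert hP using 1
    linear_combination (-(deriv v x * (1 - 2*α*(s*v x)))) * E1
  refine hP0.congr_of_eventuallyEq ?_
  filter_upwards [hsgn] with y hy
  rw [hy]
  linear_combination (-(2*α/3) * lam * s * (v y)^3) * hs2

lemma keyB {α lam : ℝ} {v : ℝ → ℝ} {x : ℝ}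
    (hCD : ContDiffAt ℝ 2 v x) (h0 : v x = 0) (h1 : deriv v x = 0) :
    HasDerivAt (fun y => (deriv v y * (1 - 2*α*|v y|))^2/2
      + lam*((v y)^2/2 - (2*α/3)*|v y|^3)) 0 x := by
  obtain ⟨hev, hd2⟩ := contDiffAt_two_elim hCD
  have hv1 : HasDerivAt v 0 x := h1 ▸ hev.self_of_nhds
  have hvc : ContinuousAt v x := hv1.continuousAt
  -- deriv v = O(y - x)
  have hvd_O : (fun y => deriv v y) =O[nhds x] fun y => y - x := by
    have := hd2.isBigO_sub
    simpa [h1] using this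
  -- v = o(y - x)
  have hv_o : (fun y => v y) =o[nhds x] fun y => y - x := by
    have := hasDerivAt_iff_isLittleO.mp hv1
    simpa [h0] using this
  have hsub_o : (fun y => y - x) =o[nhds x] (fun _ => (1:ℝ)) := by
    rw [isLittleO_one_iff]
    have h : Tendsto (fun y : ℝ => y - x) (nhds x) (nhds (x - x)) :=
      ((continuous_id (X := ℝ)).sub (continuous_const (y := x))).tendsto x
    simpa using h
  have hq : (fun y => (y - x) * (y - x)) =o[nhds x] fun y => y - x := by
    have := hsub_o.mul_isBigO (isBigO_refl (fun y => y - x) (nhds x))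
    simpa using this
  have hB : (fun y => (1 - 2*α*|v y|)^2/2) =O[nhds x] (fun _ => (1:ℝ)) := by
    have hc : ContinuousAt (fun y => (1 - 2*α*|v y|)^2/2) x := by fun_prop
    exact Filter.Tendsto.isBigO_one (F := ℝ) hc
  have hC : (fun y => lam*(1/2 - (2*α/3)*|v y|)) =O[nhds x] (fun _ => (1:ℝ)) := by
    have hc : ContinuousAt (fun y => lam*(1/2 - (2*α/3)*|v y|)) x := by fun_prop
    exact Filter.Tendsto.isBigO_one (F := ℝ) hc
  have hvO1 : (fun y => v y) =O[nhds x] (fun _ => (1:ℝ)) := Filter.Tendsto.isBigO_one (F := ℝ) hvc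
  have t1 : (fun y => (deriv v y * deriv v y) * ((1 - 2*α*|v y|)^2/2)) =o[nhds x]
      fun y => y - x := by
    refine ((hvd_O.mul hvd_O).mul hB).trans_isLittleO ?_
    simpa using hq
  have t2 : (fun y => (v y * v y) * (lam*(1/2 - (2*α/3)*|v y|))) =o[nhds x]
      fun y => y - x := by
    have := (hv_o.mul_isBigO hvO1).mul_isBigO hC
    simpa using this
  have key : (fun y => (deriv v y * (1 - 2*α*|v y|))^2/2
      + lam*((v y)^2/2 - (2*α/3)*|v y|^3)) =o[nhds x] fun y => y - x := by
    refine (t1.add t2).congr' (Filter.Eventually.of_forall fun y => ?_) EventuallyEq.rfl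
    have h3 : |v y|^3 = v y^2 * |v y| := by rw [pow_succ, sq_abs]
    simp only [h3]; ring
  rw [hasDerivAt_iff_isLittleO]
  simpa [h0, h1] using key

lemma keyA' {α lam : ℝ} {v : ℝ → ℝ} {x : ℝ}
    (hCD : ContDiffAt ℝ 2 v x) (hne : v x ≠ 0)
    (hode : deriv (deriv (fun y => v y - α * |v y| * v y)) x + lam * v x = 0) :
    HasDerivAt (fun y => (deriv v y * (1 - 2*α*|v y|))^2/2
      + lam*((v y)^2/2 - (2*α/3)*|v y|^3)) 0 x := by
  have hvc : ContinuousAt v x := hCD.continuousAt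
  rcases hne.lt_or_gt with h | h
  · refine keyA (Or.inr rfl) hCD ?_ hode
    filter_upwards [hvc.preimage_mem_nhds (Iio_mem_nhds h)] with y hy
    simp only [mem_preimage, mem_Iio] at hy
    rw [abs_of_neg hy]; ring
  · refine keyA (Or.inl rfl) hCD ?_ hode
    filter_upwards [hvc.preimage_mem_nhds (Ioi_mem_nhds h)] with y hy
    simp only [mem_preimage, mem_Ioi] at hy
    rw [abs_of_pos hy]; ring


end Aux

section Aux2
open Filter Asymptotics

/-- If `v ∈ C²([0,1])` satisfies `(v - α|v|v)'' + λ v = 0` on `(0,1)` with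
Dirichlet boundary conditions, `v` not identically zero, and there is `c ∈ (0,1)` with
`|v c| = 1/(2α)`, `v` smooth near `0` and `c`, then `λ > 0`. -/
theorem stmt0 (α lam : ℝ) (hα : 0 < α) (v : ℝ → ℝ)
    (hv : ContDiffOn ℝ 2 v (Icc 0 1))
    (heq : ∀ x ∈ Ioo (0:ℝ) 1,
      deriv (deriv (fun y => v y - α * |v y| * v y)) x + lam * v x = 0)
    (hv0 : v 0 = 0) (hv1 : v 1 = 0)
    (hne : ∃ x ∈ Icc (0:ℝ) 1, v x ≠ 0)
    (c : ℝ) (hc : c ∈ Ioo (0:ℝ) 1) (hvc : |v c| = 1 / (2 * α))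
    (hsm0 : ContDiffAt ℝ (⊤ : ℕ∞) v 0) (hsmc : ContDiffAt ℝ (⊤ : ℕ∞) v c) :
    0 < lam := by
  obtain ⟨hc0, hc1⟩ := hc
  have hCD' : ∀ x ∈ Ioo (0:ℝ) 1, ContDiffAt ℝ 2 v x := fun x hx =>
    hv.contDiffAt (Icc_mem_nhds hx.1 hx.2)
  have hCD : ∀ x ∈ Icc (0:ℝ) c, ContDiffAt ℝ 2 v x := by
    intro x hx
    rcases eq_or_lt_of_le hx.1 with h | h
    · exact h ▸ hsm0.of_le (WithTop.coe_le_coe.mpr le_top)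
    · exact hCD' x ⟨h, lt_of_le_of_lt hx.2 hc1⟩
  -- continuity of F on [0,c]
  have hFcont : ContinuousOn (fun y => (deriv v y * (1 - 2*α*|v y|))^2/2
      + lam*((v y)^2/2 - (2*α/3)*|v y|^3)) (Icc 0 c) := by
    intro x hx
    apply ContinuousAt.continuousWithinAt
    have h1 : ContinuousAt (deriv v) x := (contDiffAt_two_elim (hCD x hx)).2.continuousAt
    have h2 : ContinuousAt v x := (hCD x hx).continuousAt
    fun_prop
  -- right derivative of F is zero on [0,c)
  have hder : ∀ x ∈ Ico (0:ℝ) c, HasDerivWithinAt (fun y => (deriv v y * (1 - 2*α*|v y|))^2/2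
      + lam*((v y)^2/2 - (2*α/3)*|v y|^3)) 0 (Ici x) x := by
    intro x hx
    by_cases hnex : v x = 0
    · by_cases hd : deriv v x = 0
      · exact (keyB (hCD x ⟨hx.1, hx.2.le⟩) hnex hd).hasDerivWithinAt
      · -- corner case : local constancy on the right
        have hv1 : HasDerivAt v (deriv v x) x :=
          ((hCD x ⟨hx.1, hx.2.le⟩).differentiableAt (by norm_num)).hasDerivAt
        have hslope := hasDerivAt_iff_tendsto_slope.mp hv1
        have hne' : ∀ᶠ y in nhdsWithin x {x}ᶜ, v y ≠ 0 := by
          filter_upwards [hslope.eventually_ne hd] with y h1 h2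
          exact h1 (by simp [slope, h2, hnex])
        obtain ⟨ε, hε, hball⟩ := Metric.mem_nhdsWithin_iff.mp hne'
        set δ := min (ε/2) (c - x) with hδdef
        have hδ0 : 0 < δ := lt_min (by linarith) (by linarith [hx.2])
        have hδc : x + δ ≤ c := by
          have : δ ≤ c - x := min_le_right _ _
          linarith
        have hδε : δ < ε := lt_of_le_of_lt (min_le_left _ _) (by linarith)
        have hvy : ∀ y ∈ Ioc x (x+δ), v y ≠ 0 := by
          intro y hy
          refine hball ⟨?_, ?_⟩
          · rw [Metric.mem_ball, Real.dist_eq, abs_of_pos (by linarith [hy.1])]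
            linarith [hy.2]
          · simp only [mem_compl_iff, mem_singleton_iff]
            exact ne_of_gt hy.1
        have hF0 : ∀ y ∈ Ioc x (x+δ), HasDerivAt (fun y => (deriv v y * (1 - 2*α*|v y|))^2/2
            + lam*((v y)^2/2 - (2*α/3)*|v y|^3)) 0 y := by
          intro y hy
          have hy1 : y ∈ Ioo (0:ℝ) 1 :=
            ⟨lt_of_le_of_lt hx.1 hy.1, lt_of_le_of_lt (hy.2.trans hδc) hc1⟩
          exact keyA' (hCD' y hy1) (hvy y hy) (heq y hy1)
        have hconst : ∀ t ∈ Ioc x (x+δ), (fun y => (deriv v y * (1 - 2*α*|v y|))^2/2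
            + lam*((v y)^2/2 - (2*α/3)*|v y|^3)) t
            = (fun y => (deriv v y * (1 - 2*α*|v y|))^2/2
            + lam*((v y)^2/2 - (2*α/3)*|v y|^3)) (x+δ) := by
          intro t ht
          have hsub : Icc t (x+δ) ⊆ Icc 0 c :=
            Icc_subset_Icc (le_trans hx.1 ht.1.le) hδc
          have h := constant_of_has_deriv_right_zero (hFcont.mono hsub)
            (fun y hy => (hF0 y ⟨lt_of_lt_of_le ht.1 hy.1, hy.2.le.trans le_rfl⟩).hasDerivWithinAt)
            (x+δ) ⟨ht.2, le_rfl⟩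
          exact h.symm
        have hNB : (nhdsWithin x (Ioc x (x+δ))).NeBot := by
          rw [nhdsWithin_Ioc_eq_nhdsGT (by linarith : x < x+δ)]
          infer_instance
        have hlim : Tendsto (fun y => (deriv v y * (1 - 2*α*|v y|))^2/2
            + lam*((v y)^2/2 - (2*α/3)*|v y|^3)) (nhdsWithin x (Ioc x (x+δ)))
            (nhds ((fun y => (deriv v y * (1 - 2*α*|v y|))^2/2
            + lam*((v y)^2/2 - (2*α/3)*|v y|^3)) x)) := by
          have h := hFcont x ⟨hx.1, hx.2.le⟩
          exact h.mono (fun y hy => ⟨le_trans hx.1 hy.1.le, hy.2.trans hδc⟩)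
        have hxeq : (fun y => (deriv v y * (1 - 2*α*|v y|))^2/2
            + lam*((v y)^2/2 - (2*α/3)*|v y|^3)) x
            = (fun y => (deriv v y * (1 - 2*α*|v y|))^2/2
            + lam*((v y)^2/2 - (2*α/3)*|v y|^3)) (x+δ) := by
          haveI := hNB
          refine tendsto_nhds_unique hlim ?_
          refine Tendsto.congr' ?_ tendsto_const_nhds
          filter_upwards [self_mem_nhdsWithin] with y hy
          exact (hconst y hy).symm
        have hev2 : (fun y => (deriv v y * (1 - 2*α*|v y|))^2/2
            + lam*((v y)^2/2 - (2*α/3)*|v y|^3))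
            =ᶠ[nhdsWithin x (Ici x)] fun _ => (fun y => (deriv v y * (1 - 2*α*|v y|))^2/2
            + lam*((v y)^2/2 - (2*α/3)*|v y|^3)) x := by
          filter_upwards [Icc_mem_nhdsGE_of_mem (⟨le_rfl, by linarith⟩ : x ∈ Ico x (x+δ))]
            with y hy
          rcases eq_or_lt_of_le hy.1 with h | h
          · rw [← h]
          · exact (hconst y ⟨h, hy.2⟩).trans hxeq.symm
        exact (hasDerivWithinAt_const x _ _).congr_of_eventuallyEq hev2 rfl
    · have hx0 : 0 < x := hx.1.lt_of_ne (fun h => hnex (h ▸ hv0))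
      exact (keyA' (hCD x ⟨hx.1, hx.2.le⟩) hnex (heq x ⟨hx0, hx.2.trans hc1⟩)).hasDerivWithinAt
  -- F is constant on [0,c]
  have key := constant_of_has_deriv_right_zero hFcont hder
  have hkey := key c ⟨hc0.le, le_rfl⟩
  have e0 : (deriv v 0 * (1 - 2*α*|v 0|))^2/2
      + lam*((v 0)^2/2 - (2*α/3)*|v 0|^3) = (deriv v 0)^2/2 := by
    norm_num [hv0]
  have ec : (deriv v c * (1 - 2*α*|v c|))^2/2
      + lam*((v c)^2/2 - (2*α/3)*|v c|^3) = lam/(24*α^2) := by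
    have h2 : (v c)^2 = (1/(2*α))^2 := by rw [← sq_abs, hvc]
    rw [hvc, h2]
    field_simp
    ring
  rw [ec, e0] at hkey
  have hlam : lam = 12*α^2*(deriv v 0)^2 := by
    field_simp at hkey
    nlinarith [hkey]
  have hlam0 : 0 ≤ lam := by rw [hlam]; positivity
  rcases hlam0.lt_or_eq with h | h
  · exact h
  · exfalso
    have hl0 : lam = 0 := h.symm
    have h5 : (deriv v 0)^2 = 0 := by nlinarith [sq_nonneg (deriv v 0), mul_pos hα hα]
    have hd0 : deriv v 0 = 0 := by
      exact pow_eq_zero_iff two_ne_zero |>.mp h5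
    have hW : ∀ y ∈ Icc (0:ℝ) c, deriv v y * (1 - 2*α*|v y|) = 0 := by
      intro y hy
      have h := key y hy
      rw [e0] at h
      simp only [hl0, hd0] at h
      norm_num at h
      rcases h with h | h <;> rw [h] <;> ring
    have hwder : ∀ y ∈ Ico (0:ℝ) c,
        HasDerivWithinAt (fun z => v z - α * |v z| * v z) 0 (Ici y) y := by
      intro y hy
      have hvy : HasDerivAt v (deriv v y) y :=
        ((hCD y ⟨hy.1, hy.2.le⟩).differentiableAt (by norm_num)).hasDerivAt
      have h2 : HasDerivAt (fun z => v z - α * |v z| * v z)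
          (deriv v y - α * (2 * |v y| * deriv v y)) y :=
        (hvy.sub ((hasDerivAt_absMul hvy).const_mul α)).congr_of_eventuallyEq
          (Eventually.of_forall fun z => by simp only [Pi.sub_apply]; ring)
      have h3 : deriv v y - α * (2 * |v y| * deriv v y) = 0 := by
        have h4 := hW y ⟨hy.1, hy.2.le⟩
        linear_combination h4
      rw [h3] at h2
      exact h2.hasDerivWithinAt
    have hvcont : ContinuousOn v (Icc 0 c) :=
      hv.continuousOn.mono (Icc_subset_Icc le_rfl hc1.le)
    have hwcont : ContinuousOn (fun z => v z - α * |v z| * v z) (Icc 0 c) :=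
      hvcont.sub ((continuousOn_const.mul hvcont.abs).mul hvcont)
    have hwc := constant_of_has_deriv_right_zero hwcont hwder c ⟨hc0.le, le_rfl⟩
    simp only [hv0, abs_zero] at hwc
    norm_num at hwc
    rw [hvc] at hwc
    have hvc0 : v c = 0 := by
      field_simp at hwc
      have h7 : α * v c = 0 := by linear_combination α * hwc
      rcases mul_eq_zero.mp h7 with h8 | h8
      · exact absurd h8 hα.ne'
      · exact h8
    rw [hvc0] at hvc
    simp at hvc
    have : (0:ℝ) < 1/(2*α) := by positivity
    linarith [hvc]


end Aux2
end

section
/- Let α > 0, λ > 0, and let v be a C² function on [0,1] with v(0) = v(1) = 0 satisfying the expanded equation v''(1 - 2α|v|) - 2α (v/|v|) (v')² + λ v = 0 wherever v ≠ 0. If v attains a positive maximum at an interior point c with v(c) > 1/(2α) and v is C² near c, then a contradiction follows; hence ‖v‖_∞ ≤ 1/(2α). -/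
open Set Filter Topology

/-! If `v` exceeds `1/(2α)` somewhere, it has an interior maximum `c` with `v c > 1/(2α)`,
where `v' c = 0` and `v'' c ≤ 0`; the equation then reads `v''(c)(1 - 2α v(c)) = -λ v(c)`,
whose left side is `≥ 0` and right side `< 0`. Since the equation is odd in `v`, applying the
same bound to `-v` controls the minimum. -/

theorem IsLocalMax.deriv_deriv_nonpos {f : ℝ → ℝ} {c : ℝ} (hmax : IsLocalMax f c)
    (hf : ContinuousAt f c) : deriv (deriv f) c ≤ 0 := by
  by_contra! hpos
  have hmin : IsLocalMin f c := isLocalMin_of_deriv_deriv_pos hpos hmax.deriv_eq_zero hf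
  have hconst : f =ᶠ[𝓝 c] fun _ => f c :=
    (hmax.and hmin).mono fun x hx => le_antisymm hx.1 hx.2
  have hderiv : deriv f =ᶠ[𝓝 c] fun _ => 0 :=
    hconst.eventuallyEq_nhds.mono fun x hx => hx.deriv_eq.trans (deriv_const x (f c))
  exact hpos.ne' (by simpa using hderiv.deriv_eq)

theorem not_isLocalMax_of_expanded_eq {α lam : ℝ} (hα : 0 < α) (hlam : 0 < lam)
    {v : ℝ → ℝ} {c : ℝ} (hmax : IsLocalMax v c) (hv : ContinuousAt v c)
    (hlarge : 1 / (2 * α) < v c)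
    (heq : deriv (deriv v) c * (1 - 2 * α * |v c|)
        - 2 * α * (v c / |v c|) * (deriv v c) ^ 2 + lam * v c = 0) : False := by
  have hpos : 0 < v c := lt_trans (by positivity) hlarge
  have hfactor : 1 - 2 * α * v c < 0 := by
    rw [div_lt_iff₀ (by positivity)] at hlarge
    linarith
  rw [hmax.deriv_eq_zero, abs_of_pos hpos] at heq
  nlinarith [mul_nonneg_of_nonpos_of_nonpos (hmax.deriv_deriv_nonpos hv) hfactor.le,
    mul_pos hlam hpos]

theorem le_of_expanded_eq {α lam a b : ℝ} (hα : 0 < α) (hlam : 0 < lam) {v : ℝ → ℝ}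
    (hv : Continuous v) (hva : v a = 0) (hvb : v b = 0)
    (heq : ∀ x ∈ Icc a b, v x ≠ 0 →
      deriv (deriv v) x * (1 - 2 * α * |v x|)
        - 2 * α * (v x / |v x|) * (deriv v x) ^ 2 + lam * v x = 0) :
    ∀ x ∈ Icc a b, v x ≤ 1 / (2 * α) := by
  by_contra! ⟨x, hx, hlarge⟩
  obtain ⟨c, hc, hcmax⟩ := isCompact_Icc.exists_isMaxOn ⟨x, hx⟩ hv.continuousOn
  have hvc : 1 / (2 * α) < v c := hlarge.trans_le (hcmax hx)
  have hvc_pos : 0 < v c := lt_trans (by positivity) hvc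
  have hc_int : c ∈ Ioo a b := by
    refine ⟨hc.1.lt_of_ne ?_, hc.2.lt_of_ne ?_⟩ <;> rintro rfl <;> simp_all
  exact not_isLocalMax_of_expanded_eq hα hlam (hcmax.isLocalMax (Icc_mem_nhds hc_int.1 hc_int.2))
    hv.continuousAt hvc (heq c hc hvc_pos.ne')

/-- For `α, λ > 0` and a `C²` function `v` on `[0,1]` with `v(0)=v(1)=0`
satisfying the expanded equation `v''(1-2α|v|) - 2α(v/|v|)(v')² + λv = 0` wherever
`v ≠ 0`, the sup norm of `v` is at most `1/(2α)` (an interior maximum with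
`v(c) > 1/(2α)` would yield a contradiction). -/
theorem stmt2 (α lam : ℝ) (hα : 0 < α) (hlam : 0 < lam) (v : ℝ → ℝ)
    (hv : ContDiff ℝ 2 v) (hv0 : v 0 = 0) (hv1 : v 1 = 0)
    (heq : ∀ x ∈ Icc (0:ℝ) 1, v x ≠ 0 →
      deriv (deriv v) x * (1 - 2 * α * |v x|)
        - 2 * α * (v x / |v x|) * (deriv v x) ^ 2 + lam * v x = 0) :
    ∀ x ∈ Icc (0:ℝ) 1, |v x| ≤ 1 / (2 * α) := by
  have hneg_eq : ∀ x ∈ Icc (0:ℝ) 1, (-v) x ≠ 0 →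
      deriv (deriv (-v)) x * (1 - 2 * α * |(-v) x|)
        - 2 * α * ((-v) x / |(-v) x|) * (deriv (-v) x) ^ 2 + lam * (-v) x = 0 := by
    intro x hx hvx
    simp only [Pi.neg_apply, deriv.neg', deriv.fun_neg', abs_neg, neg_div, neg_sq] at hvx ⊢
    linarith [heq x hx (neg_ne_zero.mp hvx)]
  intro x hx
  have hupper := le_of_expanded_eq hα hlam hv.continuous hv0 hv1 heq x hx
  have hlower := le_of_expanded_eq hα hlam hv.continuous.neg (by simp [hv0]) (by simp [hv1])
    hneg_eq x hx
  exact abs_le.2 ⟨by simp only [Pi.neg_apply] at hlower; linarith, hupper⟩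
end

section
/- There is no function v ∈ H¹₀(0,1) ∩ C([0,1]) satisfying v(x) - α|v(x)|v(x) = (c/α)·x(x-1) for all x ∈ [0,1], when α > 0 and c > 1. -/
open Real Set

/-- Nonexistence for large external force: for `α > 0` and `c > 1`
there is no continuous `v` with `v(0)=v(1)=0` satisfying
`v - α|v|v = (c/α)·x(x-1)` on `[0,1]`. -/
theorem stmt10 (α c : ℝ) (hα : 0 < α) (hc : 1 < c) :
    ¬ ∃ v : ℝ → ℝ, ContinuousOn v (Icc 0 1) ∧ v 0 = 0 ∧ v 1 = 0 ∧
      ∀ x ∈ Icc (0:ℝ) 1, v x - α * |v x| * v x = (c / α) * x * (x - 1) := by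
  rintro ⟨v, hcont, h0, h1, heq⟩
  have hc0 : 0 < c := lt_trans one_pos hc
  -- RHS is negative on (0,1)
  have hrhs : ∀ x : ℝ, 0 < x → x < 1 → (c / α) * x * (x - 1) < 0 := by
    intro x hx hx1
    have h : 0 < c / α := div_pos hc0 hα
    exact mul_neg_of_pos_of_neg (mul_pos h hx) (by linarith)
  -- v never vanishes on (0,1)
  have hne : ∀ x : ℝ, 0 < x → x < 1 → v x ≠ 0 := by
    intro x hx hx1 hvx
    have := heq x ⟨le_of_lt hx, le_of_lt hx1⟩
    rw [hvx, abs_zero] at this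
    have h2 := hrhs x hx hx1
    linarith
  -- find x₀ ∈ (0, 1/2] with v x₀ < 0, using continuity at 0
  have hcw : ContinuousWithinAt v (Icc 0 1) 0 :=
    hcont 0 ⟨le_refl 0, zero_le_one⟩
  rw [Metric.continuousWithinAt_iff] at hcw
  obtain ⟨δ, hδ, hδ'⟩ := hcw (1/α) (by positivity)
  set x₀ : ℝ := min (δ/2) (1/2) with hx₀def
  have hx₀pos : 0 < x₀ := lt_min (by linarith) (by norm_num)
  have hx₀half : x₀ ≤ 1/2 := min_le_right _ _
  have hx₀lt1 : x₀ < 1 := lt_of_le_of_lt hx₀half (by norm_num)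
  have hx₀mem : x₀ ∈ Icc (0:ℝ) 1 := ⟨le_of_lt hx₀pos, le_of_lt hx₀lt1⟩
  have hsmall : |v x₀| < 1/α := by
    have hd : dist x₀ 0 < δ := by
      rw [Real.dist_eq, sub_zero, abs_of_pos hx₀pos]
      exact lt_of_le_of_lt (min_le_left _ _) (by linarith)
    have := hδ' hx₀mem hd
    rw [h0] at this
    simpa [Real.dist_eq] using this
  have hvx₀neg : v x₀ < 0 := by
    rcases lt_trichotomy (v x₀) 0 with h | h | h
    · exact h
    · exact absurd h (hne x₀ hx₀pos hx₀lt1)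
    · exfalso
      have he := heq x₀ hx₀mem
      have hr := hrhs x₀ hx₀pos hx₀lt1
      rw [abs_of_pos h] at he
      -- v x₀ - α (v x₀)² < 0 with 0 < v x₀ < 1/α : contradiction
      have h1α : v x₀ < 1/α := lt_of_abs_lt (abs_of_pos h ▸ hsmall)
      have : α * v x₀ < 1 := by
        rw [lt_div_iff₀ hα] at h1α; linarith [h1α]
      nlinarith
  -- show v (1/2) < 0 via IVT
  have hvhalf : v (1/2) < 0 := by
    by_contra hpos
    push_neg at hpos
    have hne' : v (1/2) ≠ 0 := hne (1/2) (by norm_num) (by norm_num)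
    have hpos' : 0 < v (1/2) := lt_of_le_of_ne hpos (Ne.symm hne')
    have hsub : Icc x₀ (1/2 : ℝ) ⊆ Icc 0 1 := by
      apply Icc_subset_Icc (le_of_lt hx₀pos) (by norm_num)
    have := intermediate_value_Icc hx₀half (hcont.mono hsub)
    have hz : (0:ℝ) ∈ Icc (v x₀) (v (1/2)) := ⟨le_of_lt hvx₀neg, le_of_lt hpos'⟩
    obtain ⟨z, hz1, hz2⟩ := this hz
    exact hne z (lt_of_lt_of_le hx₀pos hz1.1) (lt_of_le_of_lt hz1.2 (by norm_num)) hz2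
  -- quadratic contradiction at x = 1/2
  have he := heq (1/2) ⟨by norm_num, by norm_num⟩
  rw [abs_of_neg hvhalf] at he
  set t := v (1/2) with ht
  -- he : t - α * (-t) * t = (c/α) * (1/2) * (-1/2)
  have hαne : α ≠ 0 := ne_of_gt hα
  have he' : α * t + α^2 * t^2 = -c/4 := by
    field_simp at he
    nlinarith [he]
  nlinarith [sq_nonneg (2*α*t + 1)]
end

section
/- Let λ₁ = π² and u₁(x) = sin(πx). The linear operator L: (H² ∩ H¹₀(0,1)) × ℝ → L²(0,1) × ℝ given by L(u, μ) = (u'' + λ₁ u + μ u₁, ⟨u₁', u'⟩_{L²}) is a bijection (bounded with bounded inverse). -/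
/-!
Solvability is the Fredholm alternative for the resonant problem `u'' + π²u = g`,
`u 0 = u 1 = 0`. Variation of constants gives, for every slope `c`, a solution with `u 0 = 0`
and `u' 0 = c`; it vanishes at `1` exactly when `g ⊥ sin(π·)`, which the choice
`μ = 2 ⟨f, sin(π·)⟩` arranges, and `c` then adjusts `⟨(sin π·)', u'⟩` freely.
For uniqueness, the Wronskian of a kernel element `(w, ν)` with `sin(π·)` vanishes at both
ends, which forces `ν ∫ sin²(π·) = 0`; the Wronskians with `sin(π·)` and `cos(π·)` are then
constant, so `w` is a multiple of `sin(π·)`, and the integral condition kills it.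
-/

open Real Set intervalIntegral

namespace FirstEigenpairLinearization

lemma hasDerivAt_sin_mul (k x : ℝ) : HasDerivAt (fun y => sin (k * y)) (k * cos (k * x)) x := by
  simpa [mul_comm] using ((hasDerivAt_id x).const_mul k).sin

lemma hasDerivAt_cos_mul (k x : ℝ) :
    HasDerivAt (fun y => cos (k * y)) (-(k * sin (k * x))) x := by
  simpa [mul_comm] using ((hasDerivAt_id x).const_mul k).cos

lemma deriv_sin_mul (k : ℝ) : deriv (fun y => sin (k * y)) = fun x => k * cos (k * x) :=
  funext fun x => (hasDerivAt_sin_mul k x).deriv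

lemma integral_sin_pi_mul_sq : ∫ x in (0:ℝ)..1, sin (π * x) ^ 2 = 1 / 2 := by
  rw [integral_comp_mul_left (fun x => sin x ^ 2) pi_ne_zero, integral_sin_sq]
  simp [field]

lemma integral_cos_pi_mul_sq : ∫ x in (0:ℝ)..1, cos (π * x) ^ 2 = 1 / 2 := by
  rw [integral_comp_mul_left (fun x => cos x ^ 2) pi_ne_zero, integral_cos_sq]
  simp [field]

lemma differentiable_deriv_of_contDiff_two {w : ℝ → ℝ} (hw : ContDiff ℝ 2 w) :
    Differentiable ℝ (deriv w) :=
  (hw.iterate_deriv' 1 1).differentiable one_ne_zero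

lemma contDiff_two_of_hasDerivAt {u u' u'' : ℝ → ℝ} (hu : ∀ x, HasDerivAt u (u' x) x)
    (hu' : ∀ x, HasDerivAt u' (u'' x) x) (hu'' : Continuous u'') : ContDiff ℝ 2 u := by
  have hderiv : deriv u = u' := funext fun x => (hu x).deriv
  have hderiv' : deriv u' = u'' := funext fun x => (hu' x).deriv
  refine contDiff_succ_iff_deriv (n := 1).2 ⟨fun x => (hu x).differentiableAt, by simp, ?_⟩
  rw [hderiv]
  exact contDiff_one_iff_deriv.2 ⟨fun x => (hu' x).differentiableAt, hderiv' ▸ hu''⟩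

lemma eq_of_hasDerivAt_zero {f : ℝ → ℝ} {a b : ℝ} (hf : Continuous f)
    (hd : ∀ x ∈ Ioo a b, HasDerivAt f 0 x) : ∀ x ∈ Icc a b, f x = f a := by
  intro x hx
  have := integral_eq_sub_of_hasDerivAt_of_le (f' := fun _ => 0) hx.1 hf.continuousOn
    (fun y hy => hd y ⟨hy.1, hy.2.trans_le hx.2⟩) intervalIntegrable_const
  rw [intervalIntegral.integral_zero] at this
  linarith

lemma hasDerivAt_wronskian {u u' v v' : ℝ → ℝ} {u'' v'' x : ℝ} (hu : HasDerivAt u (u' x) x)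
    (hu' : HasDerivAt u' u'' x) (hv : HasDerivAt v (v' x) x) (hv' : HasDerivAt v' v'' x) :
    HasDerivAt (fun y => u' y * v y - u y * v' y) (u'' * v x - u x * v'') x :=
  ((hu'.mul hv).sub (hu.mul hv')).congr_deriv (by ring)

/-- Variation of constants for `u'' + k²u = g`: for `k ≠ 0`, the solution with `u 0 = 0` and
`u' 0 = c`. -/
noncomputable def oscillatorSol (k c : ℝ) (g : ℝ → ℝ) (x : ℝ) : ℝ :=
  (sin (k * x) * (c + ∫ t in (0:ℝ)..x, cos (k * t) * g t)
    - cos (k * x) * ∫ t in (0:ℝ)..x, sin (k * t) * g t) / k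

noncomputable def oscillatorSolDeriv (k c : ℝ) (g : ℝ → ℝ) (x : ℝ) : ℝ :=
  cos (k * x) * (c + ∫ t in (0:ℝ)..x, cos (k * t) * g t)
    + sin (k * x) * ∫ t in (0:ℝ)..x, sin (k * t) * g t

section Oscillator

variable {k : ℝ} (c : ℝ) {g : ℝ → ℝ}

lemma hasDerivAt_oscillatorSol (hk : k ≠ 0) (hg : Continuous g) (x : ℝ) :
    HasDerivAt (oscillatorSol k c g) (oscillatorSolDeriv k c g x) x := by
  have hcos : Continuous fun t => cos (k * t) * g t := by fun_prop
  have hsin : Continuous fun t => sin (k * t) * g t := by fun_prop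
  have hC := (hcos.integral_hasStrictDerivAt 0 x).hasDerivAt.const_add c
  have hS := (hsin.integral_hasStrictDerivAt 0 x).hasDerivAt
  refine ((((hasDerivAt_sin_mul k x).mul hC).sub ((hasDerivAt_cos_mul k x).mul hS)).div_const k
    ).congr_deriv ?_
  unfold oscillatorSolDeriv
  field_simp
  ring

lemma hasDerivAt_oscillatorSolDeriv (hg : Continuous g) (x : ℝ) :
    HasDerivAt (oscillatorSolDeriv k c g) (g x - k ^ 2 * oscillatorSol k c g x) x := by
  have hcos : Continuous fun t => cos (k * t) * g t := by fun_prop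
  have hsin : Continuous fun t => sin (k * t) * g t := by fun_prop
  have hC := (hcos.integral_hasStrictDerivAt 0 x).hasDerivAt.const_add c
  have hS := (hsin.integral_hasStrictDerivAt 0 x).hasDerivAt
  refine (((hasDerivAt_cos_mul k x).mul hC).add ((hasDerivAt_sin_mul k x).mul hS)).congr_deriv ?_
  unfold oscillatorSol
  field_simp
  linear_combination g x * sin_sq_add_cos_sq (k * x)

lemma continuous_oscillatorSol (hk : k ≠ 0) (hg : Continuous g) :
    Continuous (oscillatorSol k c g) :=
  continuous_iff_continuousAt.2 fun x => (hasDerivAt_oscillatorSol c hk hg x).continuousAt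

lemma continuous_oscillatorSolDeriv (hg : Continuous g) :
    Continuous (oscillatorSolDeriv k c g) :=
  continuous_iff_continuousAt.2 fun x => (hasDerivAt_oscillatorSolDeriv c hg x).continuousAt

lemma contDiff_oscillatorSol (hk : k ≠ 0) (hg : Continuous g) :
    ContDiff ℝ 2 (oscillatorSol k c g) :=
  contDiff_two_of_hasDerivAt (hasDerivAt_oscillatorSol c hk hg) (hasDerivAt_oscillatorSolDeriv c hg)
    (hg.sub (continuous_const.mul (continuous_oscillatorSol c hk hg)))

lemma deriv_oscillatorSol (hk : k ≠ 0) (hg : Continuous g) :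
    deriv (oscillatorSol k c g) = oscillatorSolDeriv k c g :=
  funext fun x => (hasDerivAt_oscillatorSol c hk hg x).deriv

lemma deriv_deriv_oscillatorSol (hk : k ≠ 0) (hg : Continuous g) (x : ℝ) :
    deriv (deriv (oscillatorSol k c g)) x = g x - k ^ 2 * oscillatorSol k c g x := by
  rw [deriv_oscillatorSol c hk hg]
  exact (hasDerivAt_oscillatorSolDeriv c hg x).deriv

lemma oscillatorSol_zero : oscillatorSol k c g 0 = 0 := by
  simp [oscillatorSol]

lemma oscillatorSolDeriv_eq (x : ℝ) :
    oscillatorSolDeriv k c g x = c * cos (k * x) + oscillatorSolDeriv k 0 g x := by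
  unfold oscillatorSolDeriv
  ring

end Oscillator

lemma oscillatorSol_pi_one (c : ℝ) (g : ℝ → ℝ) :
    oscillatorSol π c g 1 = (∫ t in (0:ℝ)..1, sin (π * t) * g t) / π := by
  simp [oscillatorSol]

lemma exists_dirichlet_of_integral_sin_mul_eq_zero {g : ℝ → ℝ} (hg : Continuous g)
    (hg_perp : ∫ t in (0:ℝ)..1, sin (π * t) * g t = 0) (a : ℝ) :
    ∃ u : ℝ → ℝ, ContDiff ℝ 2 u ∧ u 0 = 0 ∧ u 1 = 0 ∧
      (∀ x, deriv (deriv u) x + π ^ 2 * u x = g x) ∧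
      ∫ x in (0:ℝ)..1, deriv (fun y => sin (π * y)) x * deriv u x = a := by
  set K := ∫ x in (0:ℝ)..1, π * cos (π * x) * oscillatorSolDeriv π 0 g x
  set c := 2 * (a - K) / π
  refine ⟨oscillatorSol π c g, contDiff_oscillatorSol c pi_ne_zero hg, oscillatorSol_zero c,
    by rw [oscillatorSol_pi_one, hg_perp, zero_div],
    fun x => by rw [deriv_deriv_oscillatorSol c pi_ne_zero hg]; ring, ?_⟩
  -- the free slope `c = u' 0` shifts the integral condition by `c * π / 2`
  have hsplit : ∀ x, π * cos (π * x) * oscillatorSolDeriv π c g x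
      = c * π * cos (π * x) ^ 2 + π * cos (π * x) * oscillatorSolDeriv π 0 g x := by
    intro x
    rw [oscillatorSolDeriv_eq]
    ring
  simp_rw [deriv_sin_mul, deriv_oscillatorSol c pi_ne_zero hg, hsplit]
  have hint₁ : Continuous fun x => c * π * cos (π * x) ^ 2 := by fun_prop
  have hint₂ : Continuous fun x => π * cos (π * x) * oscillatorSolDeriv π 0 g x :=
    (by fun_prop : Continuous fun x => π * cos (π * x)).mul (continuous_oscillatorSolDeriv 0 hg)
  rw [integral_add (hint₁.intervalIntegrable _ _) (hint₂.intervalIntegrable _ _),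
    integral_const_mul, integral_cos_pi_mul_sq]
  change c * π * (1 / 2) + K = a
  simp only [c]
  field_simp
  ring

lemma integral_sin_mul_eq_zero_of_dirichlet {k : ℝ} (hk : sin k = 0) {w h : ℝ → ℝ}
    (hw : ContDiff ℝ 2 w) (hh : Continuous h) (h0 : w 0 = 0) (h1 : w 1 = 0)
    (hode : ∀ x ∈ Ioo (0:ℝ) 1, deriv (deriv w) x + k ^ 2 * w x = h x) :
    ∫ x in (0:ℝ)..1, sin (k * x) * h x = 0 := by
  have hw' := differentiable_deriv_of_contDiff_two hw
  have hW x := hasDerivAt_wronskian ((hw.differentiable two_ne_zero x).hasDerivAt)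
    (hw' x).hasDerivAt (hasDerivAt_sin_mul k x) ((hasDerivAt_cos_mul k x).const_mul k)
  rw [integral_eq_sub_of_hasDerivAt_of_le zero_le_one
    (continuous_iff_continuousAt.2 fun x => (hW x).continuousAt).continuousOn
    (fun x hx => (hW x).congr_deriv (by linear_combination sin (k * x) * hode x hx))
    ((by fun_prop : Continuous fun x => sin (k * x) * h x).intervalIntegrable _ _)]
  simp [h0, h1, hk]

lemma deriv_eq_cos_and_eq_sin_of_harmonic {k b : ℝ} {w : ℝ → ℝ} (hw : ContDiff ℝ 2 w)
    (h0 : w 0 = 0) (hode : ∀ x ∈ Ioo 0 b, deriv (deriv w) x + k ^ 2 * w x = 0) :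
    ∀ x ∈ Icc 0 b,
      deriv w x = deriv w 0 * cos (k * x) ∧ k * w x = deriv w 0 * sin (k * x) := by
  have hw' := differentiable_deriv_of_contDiff_two hw
  have hconst {φ φ' : ℝ → ℝ} (hφ : ∀ x, HasDerivAt φ (φ' x) x)
      (hφ' : ∀ x, HasDerivAt φ' (-(k ^ 2 * φ x)) x) :
      ∀ x ∈ Icc 0 b, deriv w x * φ x - w x * φ' x = deriv w 0 * φ 0 - w 0 * φ' 0 := by
    have hW x := hasDerivAt_wronskian ((hw.differentiable two_ne_zero x).hasDerivAt)
      (hw' x).hasDerivAt (hφ x) (hφ' x)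
    exact eq_of_hasDerivAt_zero (continuous_iff_continuousAt.2 fun x => (hW x).continuousAt)
      fun x hx => (hW x).congr_deriv (by linear_combination φ x * hode x hx)
  have hS := hconst (hasDerivAt_sin_mul k) fun x =>
    ((hasDerivAt_cos_mul k x).const_mul k).congr_deriv (by ring)
  have hC := hconst (hasDerivAt_cos_mul k) fun x =>
    ((hasDerivAt_sin_mul k x).const_mul k).neg.congr_deriv (by ring)
  intro x hx
  have hs := hS x hx
  have hc := hC x hx
  simp only [mul_zero, sin_zero, cos_zero, h0] at hs hc
  constructor
  · linear_combination
      sin (k * x) * hs + cos (k * x) * hc - deriv w x * sin_sq_add_cos_sq (k * x)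
  · linear_combination
      -cos (k * x) * hs + sin (k * x) * hc - k * w x * sin_sq_add_cos_sq (k * x)

/-- `L(u, μ) = (f, a)` for the linearization `L` at the first Dirichlet eigenpair
`(sin(π·), π²)`. -/
def SolvesLinearized (f : ℝ → ℝ) (a : ℝ) (u : ℝ → ℝ) (μ : ℝ) : Prop :=
  ContDiff ℝ 2 u ∧ u 0 = 0 ∧ u 1 = 0 ∧
    (∀ x ∈ Ioo (0:ℝ) 1, deriv (deriv u) x + π ^ 2 * u x + μ * sin (π * x) = f x) ∧
    ∫ x in (0:ℝ)..1, deriv (fun y => sin (π * y)) x * deriv u x = a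

lemma exists_solvesLinearized {f : ℝ → ℝ} (hf : ContinuousOn f (Icc 0 1)) (a : ℝ) :
    ∃ u μ, SolvesLinearized f a u μ := by
  set F := fun x => f (projIcc (0:ℝ) 1 zero_le_one x)
  have hF : Continuous F := hf.comp_continuous (continuous_subtype_val.comp continuous_projIcc)
    fun x => (projIcc (0:ℝ) 1 zero_le_one x).2
  set μ := 2 * ∫ t in (0:ℝ)..1, sin (π * t) * F t
  have hperp : ∫ t in (0:ℝ)..1, sin (π * t) * (F t - μ * sin (π * t)) = 0 := by
    have hsplit : ∀ t, sin (π * t) * (F t - μ * sin (π * t))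
        = sin (π * t) * F t - μ * sin (π * t) ^ 2 := by
      intro t
      ring
    simp_rw [hsplit]
    rw [integral_sub ((by fun_prop : Continuous fun t => sin (π * t) * F t).intervalIntegrable _ _)
      ((by fun_prop : Continuous fun t => μ * sin (π * t) ^ 2).intervalIntegrable _ _),
      integral_const_mul, integral_sin_pi_mul_sq]
    ring
  obtain ⟨u, hu, h0, h1, hode, hint⟩ :=
    exists_dirichlet_of_integral_sin_mul_eq_zero (by fun_prop) hperp a
  refine ⟨u, μ, hu, h0, h1, fun x hx => ?_, hint⟩
  rw [add_assoc, ← add_assoc _ (π ^ 2 * u x), hode x]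
  simp [F, projIcc_of_mem zero_le_one (Ioo_subset_Icc_self hx)]

lemma SolvesLinearized.sub {f : ℝ → ℝ} {a μ₁ μ₂ : ℝ} {u₁ u₂ : ℝ → ℝ}
    (h₁ : SolvesLinearized f a u₁ μ₁) (h₂ : SolvesLinearized f a u₂ μ₂) :
    SolvesLinearized 0 0 (u₁ - u₂) (μ₁ - μ₂) := by
  obtain ⟨hu₁, h0₁, h1₁, hode₁, hint₁⟩ := h₁
  obtain ⟨hu₂, h0₂, h1₂, hode₂, hint₂⟩ := h₂
  have hd₁ := differentiable_deriv_of_contDiff_two hu₁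
  have hd₂ := differentiable_deriv_of_contDiff_two hu₂
  have hc₁ := hd₁.continuous
  have hc₂ := hd₂.continuous
  have hderiv : deriv (u₁ - u₂) = deriv u₁ - deriv u₂ := funext fun x =>
    deriv_sub (hu₁.differentiable two_ne_zero x) (hu₂.differentiable two_ne_zero x)
  have hderiv2 : deriv (deriv (u₁ - u₂)) = deriv (deriv u₁) - deriv (deriv u₂) := by
    rw [hderiv]
    exact funext fun x => deriv_sub (hd₁ x) (hd₂ x)
  refine ⟨hu₁.sub hu₂, by simp [h0₁, h0₂], by simp [h1₁, h1₂], fun x hx => ?_, ?_⟩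
  · simp only [hderiv2, Pi.sub_apply, Pi.zero_apply]
    linear_combination hode₁ x hx - hode₂ x hx
  · simp only [hderiv, deriv_sin_mul, Pi.sub_apply, mul_sub] at hint₁ hint₂ ⊢
    rw [integral_sub ((by fun_prop : Continuous _).intervalIntegrable _ _)
      ((by fun_prop : Continuous _).intervalIntegrable _ _), hint₁, hint₂, sub_self]

lemma SolvesLinearized.eq_zero {w : ℝ → ℝ} {ν : ℝ} (h : SolvesLinearized 0 0 w ν) :
    ν = 0 ∧ ∀ x ∈ Icc (0:ℝ) 1, w x = 0 := by
  obtain ⟨hw, h0, h1, hode, hint⟩ := h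
  simp only [Pi.zero_apply] at hode
  have hν : ν = 0 := by
    have := integral_sin_mul_eq_zero_of_dirichlet sin_pi hw (h := fun x => -(ν * sin (π * x)))
      (by fun_prop) h0 h1 fun x hx => by linear_combination hode x hx
    simp_rw [mul_neg, ← mul_assoc, mul_comm _ ν, mul_assoc, ← sq] at this
    rw [integral_neg, integral_const_mul, integral_sin_pi_mul_sq] at this
    linarith
  subst hν
  have hform := deriv_eq_cos_and_eq_sin_of_harmonic hw h0 fun x hx => by simpa using hode x hx
  have hb : deriv w 0 = 0 := by
    rw [deriv_sin_mul, integral_congr (g := fun x => π * deriv w 0 * cos (π * x) ^ 2)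
      fun x hx => by
        rw [uIcc_of_le zero_le_one] at hx
        simp only [(hform x hx).1]
        ring,
      integral_const_mul, integral_cos_pi_mul_sq] at hint
    simpa [pi_ne_zero] using hint
  refine ⟨rfl, fun x hx => ?_⟩
  simpa [hb, pi_ne_zero] using (hform x hx).2

lemma SolvesLinearized.unique {f : ℝ → ℝ} {a μ₁ μ₂ : ℝ} {u₁ u₂ : ℝ → ℝ}
    (h₁ : SolvesLinearized f a u₁ μ₁) (h₂ : SolvesLinearized f a u₂ μ₂) :
    μ₁ = μ₂ ∧ ∀ x ∈ Icc (0:ℝ) 1, u₁ x = u₂ x := by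
  obtain ⟨hμ, hu⟩ := (h₁.sub h₂).eq_zero
  exact ⟨sub_eq_zero.1 hμ, fun x hx => sub_eq_zero.1 (hu x hx)⟩

end FirstEigenpairLinearization

open FirstEigenpairLinearization in
/-- The linearization `L(u,μ) = (u'' + π²u + μ sin(πx), ⟨(sin(π·))', u'⟩)`
at the first eigenpair is bijective: for every datum `(f, a)` there exists a solution
`(u, μ)`, and it is unique (as a function on `[0,1]`). -/
theorem stmt13 (f : ℝ → ℝ) (hf : ContinuousOn f (Icc 0 1)) (a : ℝ) :
    (∃ u : ℝ → ℝ, ∃ μ : ℝ, ContDiff ℝ 2 u ∧ u 0 = 0 ∧ u 1 = 0 ∧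
      (∀ x ∈ Ioo (0:ℝ) 1,
        deriv (deriv u) x + π ^ 2 * u x + μ * Real.sin (π * x) = f x) ∧
      (∫ x in (0:ℝ)..1, deriv (fun y => Real.sin (π * y)) x * deriv u x) = a) ∧
    (∀ u₁ u₂ : ℝ → ℝ, ∀ μ₁ μ₂ : ℝ,
      (ContDiff ℝ 2 u₁ ∧ u₁ 0 = 0 ∧ u₁ 1 = 0 ∧
        (∀ x ∈ Ioo (0:ℝ) 1,
          deriv (deriv u₁) x + π ^ 2 * u₁ x + μ₁ * Real.sin (π * x) = f x) ∧
        (∫ x in (0:ℝ)..1, deriv (fun y => Real.sin (π * y)) x * deriv u₁ x) = a) →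
      (ContDiff ℝ 2 u₂ ∧ u₂ 0 = 0 ∧ u₂ 1 = 0 ∧
        (∀ x ∈ Ioo (0:ℝ) 1,
          deriv (deriv u₂) x + π ^ 2 * u₂ x + μ₂ * Real.sin (π * x) = f x) ∧
        (∫ x in (0:ℝ)..1, deriv (fun y => Real.sin (π * y)) x * deriv u₂ x) = a) →
      μ₁ = μ₂ ∧ ∀ x ∈ Icc (0:ℝ) 1, u₁ x = u₂ x) :=
  ⟨exists_solvesLinearized hf a, fun _ _ _ _ h₁ h₂ => SolvesLinearized.unique h₁ h₂⟩
end
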